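/- Let X be a Hilbert space, φ ∈ C²(X, ℝ), c ∈ ℝ, ε > 0. Assume that for all u ∈ φ⁻¹([c−2ε, c+2ε]) one has ‖φ′(u)‖ ≥ 2ε. Then there exists a continuous map η : X → X such that (a) η(u) = u for all u ∉ φ⁻¹([c−2ε, c+2ε]), and (b) η maps φ⁻¹((−∞, c+ε]) into φ⁻¹((−∞, c−ε]). -/

import Mathlib

/-!
The field `V = -(χ ∘ φ) ∇φ / ‖∇φ‖²`, with `χ` a bump equal to `1` on `[c - ε, c + ε]` and
supported in `[c - 2ε, c + 2ε]`, is `C¹` (it vanishes near critical points, which lie outside the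
band) and bounded by `1 / (2ε)`. A bounded locally Lipschitz field on a Banach space has a flow
defined for all times, and Grönwall's inequality on a tube around a trajectory, where `V` is
uniformly Lipschitz by compactness, makes the time-`T` map continuous. Along the flow `φ` decreases
at speed `χ ∘ φ ≤ 1`, and at unit speed inside `[c - ε, c + ε]`, so the time-`2ε` map pushes
`φ^{c+ε}` into `φ^{c-ε}`; it fixes every point outside the band, where `V` vanishes.
-/

open Set Metric Filter Topology
open scoped NNReal

section LocallyLipschitz

variable {α β : Type*} [PseudoMetricSpace α] [PseudoMetricSpace β] {V : α → β}

theorem LocallyLipschitz.exists_lipschitzOnWith_ball (hV : LocallyLipschitz V) (x : α) :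
    ∃ ρ > 0, ∃ L, LipschitzOnWith L V (ball x ρ) := by
  obtain ⟨L, s, hs, hl⟩ := hV x
  obtain ⟨ρ, hρ, hsub⟩ := Metric.mem_nhds_iff.mp hs
  exact ⟨ρ, hρ, L, hl.mono hsub⟩

theorem IsCompact.exists_forall_lipschitzOnWith_ball {K : Set α} (hK : IsCompact K)
    (hV : LocallyLipschitz V) : ∃ δ > 0, ∃ L, ∀ k ∈ K, LipschitzOnWith L V (ball k δ) := by
  choose ρ hρ L hL using hV.exists_lipschitzOnWith_ball
  obtain ⟨t, hcover⟩ := hK.elim_finite_subcover (fun x ↦ ball x (ρ x)) (fun _ ↦ isOpen_ball)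
    fun k _ ↦ mem_iUnion.2 ⟨k, mem_ball_self (hρ k)⟩
  obtain ⟨δ, hδ, hleb⟩ := lebesgue_number_lemma_of_metric hK
    (c := fun i : t ↦ ball (i : α) (ρ i)) (fun _ ↦ isOpen_ball) (by simpa [iUnion_subtype])
  refine ⟨δ, hδ, t.sup L, fun k hk ↦ ?_⟩
  obtain ⟨i, hi⟩ := hleb k hk
  exact ((hL i).weaken (Finset.le_sup i.2)).mono hi

end LocallyLipschitz

section IntegralCurve

variable {E : Type*} [NormedAddCommGroup E] [NormedSpace ℝ E] {V : E → E}

theorem IsIntegralCurveOn.hasDerivWithinAt_Ici {γ : ℝ → E} {v : ℝ → E → E} {a b t : ℝ}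
    (hγ : IsIntegralCurveOn γ v (Icc a b)) (ht : t ∈ Ico a b) :
    HasDerivWithinAt γ (v t (γ t)) (Ici t) t :=
  (hγ t (Ico_subset_Icc_self ht)).mono_of_mem_nhdsWithin (Icc_mem_nhdsGE_of_mem ht)

theorem IsIntegralCurveOn.dist_le_of_mem {γ γ' : ℝ → E} {s : ℝ → Set E} {L : ℝ≥0} {a b : ℝ}
    (hV : ∀ t ∈ Ico a b, LipschitzOnWith L V (s t))
    (hγ : IsIntegralCurveOn γ (fun _ ↦ V) (Icc a b)) (hγs : ∀ t ∈ Ico a b, γ t ∈ s t)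
    (hγ' : IsIntegralCurveOn γ' (fun _ ↦ V) (Icc a b)) (hγ's : ∀ t ∈ Ico a b, γ' t ∈ s t) :
    ∀ t ∈ Icc a b, dist (γ t) (γ' t) ≤ dist (γ a) (γ' a) * Real.exp (L * (t - a)) :=
  dist_le_of_trajectories_ODE_of_mem hV hγ.continuousOn (fun _ ht ↦ hγ.hasDerivWithinAt_Ici ht)
    hγs hγ'.continuousOn (fun _ ht ↦ hγ'.hasDerivWithinAt_Ici ht) hγ's le_rfl

theorem IsIntegralCurveOn.eqOn_Icc (hV : LocallyLipschitz V) {γ γ' : ℝ → E} {a b : ℝ}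
    (hγ : IsIntegralCurveOn γ (fun _ ↦ V) (Icc a b))
    (hγ' : IsIntegralCurveOn γ' (fun _ ↦ V) (Icc a b)) (h : γ a = γ' a) :
    EqOn γ γ' (Icc a b) := by
  obtain ⟨L, hL⟩ := hV.locallyLipschitzOn.exists_lipschitzOnWith_of_compact
    ((isCompact_Icc.image_of_continuousOn hγ.continuousOn).union
      (isCompact_Icc.image_of_continuousOn hγ'.continuousOn))
  intro t ht
  have := hγ.dist_le_of_mem (fun _ _ ↦ hL)
    (fun t ht ↦ .inl (mem_image_of_mem _ (Ico_subset_Icc_self ht))) hγ'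
    (fun t ht ↦ .inr (mem_image_of_mem _ (Ico_subset_Icc_self ht))) t ht
  rwa [h, dist_self, zero_mul, dist_le_zero] at this

theorem IsIntegralCurveOn.piecewise_Icc {γ γ' : ℝ → E} {v : ℝ → E → E} {a b c : ℝ}
    (hab : a ≤ b) (hbc : b ≤ c) (hγ : IsIntegralCurveOn γ v (Icc a b))
    (hγ' : IsIntegralCurveOn γ' v (Icc b c)) (h : γ b = γ' b) :
    IsIntegralCurveOn (fun t ↦ if t ≤ b then γ t else γ' t) v (Icc a c) := by
  set g := fun t ↦ if t ≤ b then γ t else γ' t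
  have hg : EqOn g γ (Icc a b) := fun t ht ↦ if_pos ht.2
  have hg' : EqOn g γ' (Icc b c) := fun t ht ↦ by
    rcases ht.1.eq_or_lt with rfl | hlt
    · simp [g, h]
    · exact if_neg hlt.not_ge
  have hderiv {δ : ℝ → E} {s : Set ℝ} (hs : IsClosed s) (hδ : IsIntegralCurveOn δ v s)
      (hgδ : EqOn g δ s) (t : ℝ) : HasDerivWithinAt g (v t (g t)) s t := by
    by_cases ht : t ∈ s
    · rw [hgδ ht]
      exact (hδ t ht).congr hgδ (hgδ ht)
    · exact HasFDerivWithinAt.of_notMem_closure (by rwa [hs.closure_eq])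
  intro t _
  rw [← Icc_union_Icc_eq_Icc hab hbc]
  exact (hderiv isClosed_Icc hγ hg t).union (hderiv isClosed_Icc hγ' hg' t)

theorem IsIntegralCurveOn.lipschitzOnWith {C : ℝ≥0} (hb : ∀ x, ‖V x‖ ≤ C) {γ : ℝ → E}
    {a b : ℝ} (hγ : IsIntegralCurveOn γ (fun _ ↦ V) (Icc a b)) :
    LipschitzOnWith C γ (Icc a b) :=
  (convex_Icc a b).lipschitzOnWith_of_nnnorm_hasDerivWithin_le hγ fun t _ ↦ hb (γ t)

theorem exists_isIntegralCurveOn_Icc_of_lipschitzOnWith [CompleteSpace E] {x₀ : E} {ρ C h : ℝ}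
    {L : ℝ≥0} (hρ : 0 ≤ ρ) (hh : 0 ≤ h) (hCh : C * h ≤ ρ)
    (hb : ∀ x ∈ closedBall x₀ ρ, ‖V x‖ ≤ C) (hl : LipschitzOnWith L V (closedBall x₀ ρ))
    (t₀ : ℝ) : ∃ γ, γ t₀ = x₀ ∧ IsIntegralCurveOn γ (fun _ ↦ V) (Icc t₀ (t₀ + h)) := by
  have hC : 0 ≤ C := (norm_nonneg _).trans (hb x₀ (mem_closedBall_self hρ))
  have hpl : IsPicardLindelof (fun _ ↦ V) (tmin := t₀) (tmax := t₀ + h)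
      ⟨t₀, left_mem_Icc.2 (by linarith)⟩ x₀ ρ.toNNReal 0 C.toNNReal L := by
    apply IsPicardLindelof.of_time_independent
    · simpa [Real.coe_toNNReal _ hρ, Real.coe_toNNReal _ hC] using hb
    · simpa [Real.coe_toNNReal _ hρ] using hl
    · simpa [Real.coe_toNNReal _ hρ, Real.coe_toNNReal _ hC, hh] using hCh
  exact hpl.exists_eq_forall_mem_Icc_hasDerivWithinAt₀

theorem IsIntegralCurveOn.exists_extension [CompleteSpace E] {C : ℝ≥0} (hC : 0 < C)
    (hb : ∀ x, ‖V x‖ ≤ C) {γ : ℝ → E} {a b ρ : ℝ} {L : ℝ≥0} (hab : a ≤ b)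
    (hγ : IsIntegralCurveOn γ (fun _ ↦ V) (Icc a b)) (hρ : 0 ≤ ρ)
    (hl : LipschitzOnWith L V (closedBall (γ b) ρ)) :
    ∃ γ', γ' a = γ a ∧ IsIntegralCurveOn γ' (fun _ ↦ V) (Icc a (b + ρ / C)) := by
  have hh : 0 ≤ ρ / C := div_nonneg hρ C.2
  obtain ⟨w, hw, hw'⟩ := exists_isIntegralCurveOn_Icc_of_lipschitzOnWith hρ hh
    (mul_div_cancel₀ _ (NNReal.coe_ne_zero.2 hC.ne')).le (fun x _ ↦ hb x) hl b
  exact ⟨_, if_pos hab, hγ.piecewise_Icc hab (le_add_of_nonneg_right hh) hw' hw.symm⟩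

theorem lipschitzOnWith_endpoint_of_isIntegralCurveOn (hV : LocallyLipschitz V) {C : ℝ≥0}
    (hb : ∀ x, ‖V x‖ ≤ C) {x₀ : E} {γ : ℝ → ℝ → E} {s : Set ℝ} (hs : s ⊆ Ici 0)
    (hγ0 : ∀ a ∈ s, γ a 0 = x₀) (hγ : ∀ a ∈ s, IsIntegralCurveOn (γ a) (fun _ ↦ V) (Icc 0 a)) :
    LipschitzOnWith C (fun a ↦ γ a a) s := by
  refine LipschitzOnWith.of_dist_le_mul fun a ha a' ha' ↦ ?_
  wlog haa' : a ≤ a' generalizing a a'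
  · rw [dist_comm, dist_comm a]
    exact this a' ha' a ha (le_of_not_ge haa')
  have hsub : Icc 0 a ⊆ Icc 0 a' := Icc_subset_Icc_right haa'
  have hamem : a ∈ Icc 0 a := right_mem_Icc.2 (hs ha)
  rw [(hγ a ha).eqOn_Icc hV ((hγ a' ha').mono hsub) ((hγ0 a ha).trans (hγ0 a' ha').symm) hamem]
  exact ((hγ a' ha').lipschitzOnWith hb).dist_le_mul a (hsub hamem) a'
    (right_mem_Icc.2 (hs ha'))

theorem UniformContinuousOn.exists_tendsto_nhdsLT {β : Type*} [UniformSpace β] [CompleteSpace β]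
    {f : ℝ → β} {a b : ℝ} (hab : a < b) (hf : UniformContinuousOn f (Ico a b)) :
    ∃ l, Tendsto f (𝓝[<] b) (𝓝 l) := by
  rw [← nhdsWithin_Ico_eq_nhdsLT hab]
  have : (𝓝[Ico a b] b).NeBot := by rw [nhdsWithin_Ico_eq_nhdsLT hab]; infer_instance
  exact CompleteSpace.complete ((cauchy_nhds.mono nhdsWithin_le_nhds).map_of_le hf inf_le_right)

-- By uniqueness the endpoints `γ a a` form a Lipschitz map, so they converge as `a → τ`, and
-- around the limit point the local existence time is bounded below.
theorem exists_isIntegralCurveOn_Icc_gt_of_forall_lt [CompleteSpace E] (hV : LocallyLipschitz V)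
    {C : ℝ≥0} (hC : 0 < C) (hb : ∀ x, ‖V x‖ ≤ C) {x₀ : E} {τ : ℝ} (hτ : 0 < τ)
    (h : ∀ a ∈ Ico 0 τ, ∃ γ : ℝ → E, γ 0 = x₀ ∧ IsIntegralCurveOn γ (fun _ ↦ V) (Icc 0 a)) :
    ∃ b > τ, ∃ γ : ℝ → E, γ 0 = x₀ ∧ IsIntegralCurveOn γ (fun _ ↦ V) (Icc 0 b) := by
  choose! γ hγ0 hγ using h
  obtain ⟨l, hl⟩ := (lipschitzOnWith_endpoint_of_isIntegralCurveOn hV hb (fun _ ha ↦ ha.1) hγ0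
    hγ).uniformContinuousOn.exists_tendsto_nhdsLT hτ
  obtain ⟨R, hR, L, hL⟩ := hV.exists_lipschitzOnWith_ball l
  have hpos : ∀ᶠ a in 𝓝[<] τ, a ∈ Ioo 0 τ := Ioo_mem_nhdsLT hτ
  have hnear : ∀ᶠ a in 𝓝[<] τ, a ∈ Ioo (τ - R / 2 / C) τ :=
    Ioo_mem_nhdsLT (sub_lt_self τ (by positivity))
  obtain ⟨a, ⟨ha0, haτ⟩, hal, hτa, -⟩ :=
    (hpos.and ((hl.eventually (ball_mem_nhds l (half_pos hR))).and hnear)).exists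
  obtain ⟨γ', hγ'0, hγ'⟩ := (hγ a ⟨ha0.le, haτ⟩).exists_extension hC hb ha0.le (half_pos hR).le
    (hL.mono (closedBall_subset_ball' (by linarith [mem_ball.1 hal])))
  exact ⟨a + R / 2 / C, by linarith, γ', hγ'0.trans (hγ0 a ⟨ha0.le, haτ⟩), hγ'⟩

theorem exists_isIntegralCurveOn_Icc [CompleteSpace E] (hV : LocallyLipschitz V)
    (hbdd : Bornology.IsBounded (range V)) (x₀ : E) (T : ℝ) :
    ∃ γ, γ 0 = x₀ ∧ IsIntegralCurveOn γ (fun _ ↦ V) (Icc 0 T) := by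
  obtain ⟨C, hC, hb⟩ := hbdd.exists_pos_norm_le
  lift C to ℝ≥0 using hC.le
  replace hb : ∀ x, ‖V x‖ ≤ C := fun x ↦ hb _ (mem_range_self x)
  rcases lt_or_ge T 0 with hT | hT
  · exact ⟨fun _ ↦ x₀, rfl, fun t ht ↦ absurd (ht.1.trans ht.2) hT.not_ge⟩
  set A := {a ∈ Icc 0 T | ∃ γ : ℝ → E, γ 0 = x₀ ∧ IsIntegralCurveOn γ (fun _ ↦ V) (Icc 0 a)}
  have hA0 : 0 ∈ A := by
    refine ⟨left_mem_Icc.2 hT, fun _ ↦ x₀, rfl, fun t ht ↦ ?_⟩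
    -- within the singleton `{0}` every vector is a derivative
    rw [Icc_self] at ht ⊢
    rw [ht, ← hasDerivWithinAt_sdiff_singleton, sdiff_self]
    exact HasFDerivWithinAt.of_notMem_closure (by simp)
  have hAbdd : BddAbove A := ⟨T, fun a ha ↦ ha.1.2⟩
  have hτ0 : 0 ≤ sSup A := le_csSup hAbdd hA0
  set τ := sSup A
  obtain ⟨b, hτb, γ, hγ0, hγ⟩ : ∃ b > τ, ∃ γ : ℝ → E, γ 0 = x₀ ∧
      IsIntegralCurveOn γ (fun _ ↦ V) (Icc 0 b) := by
    by_cases hτA : τ ∈ A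
    · obtain ⟨hτ, γ, hγ0, hγ⟩ := hτA
      obtain ⟨R, hR, L, hL⟩ := hV.exists_lipschitzOnWith_ball (γ τ)
      obtain ⟨γ', hγ'0, hγ'⟩ := hγ.exists_extension hC hb hτ.1 (half_pos hR).le
        (hL.mono (closedBall_subset_ball (half_lt_self hR)))
      exact ⟨_, lt_add_of_pos_right _ (by positivity), γ', hγ'0.trans hγ0, hγ'⟩
    refine exists_isIntegralCurveOn_Icc_gt_of_forall_lt hV hC hb
      (hτ0.lt_of_ne' fun h ↦ hτA (by rwa [h])) fun a ha ↦ ?_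
    obtain ⟨b, ⟨_, γ, hγ0, hγ⟩, hab⟩ := exists_lt_of_lt_csSup ⟨0, hA0⟩ ha.2
    exact ⟨γ, hγ0, hγ.mono (Icc_subset_Icc_right hab.le)⟩
  rcases le_total T b with h | h
  · exact ⟨γ, hγ0, hγ.mono (Icc_subset_Icc_right h)⟩
  · exact absurd (le_csSup hAbdd ⟨⟨by linarith, h⟩, γ, hγ0, hγ⟩) hτb.not_ge

theorem ContinuousOn.forall_lt_of_forall_Ico_lt {f : ℝ → ℝ} {a b c : ℝ}
    (hf : ContinuousOn f (Icc a b)) (h : ∀ t ∈ Icc a b, (∀ s ∈ Ico a t, f s < c) → f t < c) :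
    ∀ t ∈ Icc a b, f t < c := by
  by_contra! hne
  set S := Icc a b ∩ f ⁻¹' Ici c
  have hbdd : BddBelow S := ⟨a, fun s hs ↦ hs.1.1⟩
  have hmem : sInf S ∈ S :=
    (hf.preimage_isClosed_of_isClosed isClosed_Icc isClosed_Ici).csInf_mem hne hbdd
  refine (h _ hmem.1 fun s hs ↦ ?_).not_ge hmem.2
  by_contra! hcs
  exact hs.2.not_ge (csInf_le hbdd ⟨⟨hs.1, hs.2.le.trans hmem.1.2⟩, hcs⟩)

theorem continuous_of_isIntegralCurveOn (hV : LocallyLipschitz V) {Φ : E → ℝ → E} {T : ℝ}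
    (hT : 0 ≤ T) (hΦ0 : ∀ x, Φ x 0 = x)
    (hΦ : ∀ x, IsIntegralCurveOn (Φ x) (fun _ ↦ V) (Icc 0 T)) : Continuous (Φ · T) := by
  refine continuous_iff_continuousAt.2 fun x₀ ↦ ?_
  obtain ⟨δ, hδ, L, hL⟩ := (isCompact_Icc.image_of_continuousOn
    (hΦ x₀).continuousOn).exists_forall_lipschitzOnWith_ball hV
  set M := Real.exp (L * T)
  refine continuousAt_of_locally_lipschitz (div_pos hδ (Real.exp_pos (L * T))) M fun x hx ↦ ?_
  -- Grönwall holds as long as `Φ x` stays in the `δ`-tube around `Φ x₀`, where `V` is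
  -- `L`-Lipschitz, and the resulting bound keeps `Φ x` inside the tube.
  have hgronwall : ∀ t ∈ Icc 0 T, (∀ s ∈ Ico 0 t, dist (Φ x s) (Φ x₀ s) < δ) →
      dist (Φ x t) (Φ x₀ t) ≤ dist x x₀ * M := by
    intro t ht hclose
    have hsub : Icc 0 t ⊆ Icc 0 T := Icc_subset_Icc_right ht.2
    calc dist (Φ x t) (Φ x₀ t) ≤ dist (Φ x 0) (Φ x₀ 0) * Real.exp (L * (t - 0)) :=
          ((hΦ x).mono hsub).dist_le_of_mem (s := fun s ↦ ball (Φ x₀ s) δ)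
            (fun s hs ↦ hL _ (mem_image_of_mem _ (hsub (Ico_subset_Icc_self hs))))
            (fun s hs ↦ mem_ball.2 (hclose s hs)) ((hΦ x₀).mono hsub)
            (fun s _ ↦ mem_ball_self hδ) t (right_mem_Icc.2 ht.1)
      _ ≤ dist x x₀ * M := by
          rw [hΦ0, hΦ0, sub_zero]
          gcongr
          exact Real.exp_le_exp.2 (mul_le_mul_of_nonneg_left ht.2 L.2)
  have hsmall : dist x x₀ * M < δ := (lt_div_iff₀ (Real.exp_pos _)).1 hx
  have hclose := ContinuousOn.forall_lt_of_forall_Ico_lt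
    (continuous_dist.comp_continuousOn ((hΦ x).continuousOn.prodMk (hΦ x₀).continuousOn))
    fun t ht h ↦ (hgronwall t ht h).trans_lt hsmall
  rw [mul_comm]
  exact hgronwall T (right_mem_Icc.2 hT) fun s hs ↦ hclose s (Ico_subset_Icc_self hs)

end IntegralCurve

theorem le_of_hasDerivWithinAt_neg_of_eqOn_one {y χ : ℝ → ℝ} {m M T : ℝ} (hT : 0 ≤ T)
    (hMT : M - T ≤ m) (hy : ∀ t ∈ Icc 0 T, HasDerivWithinAt y (-χ (y t)) (Icc 0 T) t)
    (hχ : ∀ s, 0 ≤ χ s) (hχ1 : EqOn χ 1 (Icc m M)) (h0 : y 0 ≤ M) : y T ≤ m := by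
  have hcont : ContinuousOn y (Icc 0 T) := fun t ht ↦ (hy t ht).continuousWithinAt
  have hy' : ∀ t ∈ interior (Icc 0 T),
      HasDerivWithinAt y (-χ (y t)) (interior (Icc 0 T)) t := fun t ht ↦
    (hy t (interior_subset ht)).mono interior_subset
  have hanti : AntitoneOn y (Icc 0 T) := antitoneOn_of_hasDerivWithinAt_nonpos (convex_Icc 0 T)
    hcont hy' fun t _ ↦ neg_nonpos.2 (hχ _)
  -- If `y T > m`, the whole path stays in `[m, M]`, where `y` descends at unit speed.
  by_contra! hm
  have hband : ∀ t ∈ Icc 0 T, χ (y t) = 1 := fun t ht ↦ hχ1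
    ⟨hm.le.trans (hanti ht (right_mem_Icc.2 hT) ht.2), (hanti (left_mem_Icc.2 hT) ht ht.1).trans h0⟩
  have hanti' : AntitoneOn (fun t ↦ y t + t) (Icc 0 T) :=
    antitoneOn_of_hasDerivWithinAt_nonpos (convex_Icc 0 T) (hcont.add continuousOn_id)
      (fun t ht ↦ (hy' t ht).add (hasDerivWithinAt_id t _))
      fun t ht ↦ by simp [hband t (interior_subset ht)]
  have := hanti' (left_mem_Icc.2 hT) (right_mem_Icc.2 hT) hT
  simp only [add_zero] at this
  linarith

section Deformation

variable {X : Type*} [NormedAddCommGroup X] [InnerProductSpace ℝ X] [CompleteSpace X]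
  {φ : X → ℝ} {χ : ℝ → ℝ}

theorem contDiff_gradient {n : WithTop ℕ∞} (hφ : ContDiff ℝ (n + 1) φ) :
    ContDiff ℝ n (gradient φ) :=
  (InnerProductSpace.toDual ℝ X).symm.contDiff.comp (hφ.fderiv_right le_rfl)

theorem norm_gradient_eq_norm_fderiv (u : X) : ‖gradient φ u‖ = ‖fderiv ℝ φ u‖ :=
  (InnerProductSpace.toDual ℝ X).symm.norm_map _

variable (φ χ) in
noncomputable def deformationField (u : X) : X :=
  -(χ (φ u) / ‖gradient φ u‖ ^ 2) • gradient φ u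

theorem norm_deformationField (u : X) :
    ‖deformationField φ χ u‖ = |χ (φ u)| / ‖gradient φ u‖ := by
  rw [deformationField, norm_smul, norm_neg, norm_div, Real.norm_eq_abs, norm_pow, norm_norm]
  by_cases h : gradient φ u = 0
  · simp [h]
  · field_simp

theorem norm_deformationField_le {δ : ℝ} (hδ : 0 < δ) (hχ : ∀ s, |χ s| ≤ 1)
    (h : ∀ u, χ (φ u) ≠ 0 → δ ≤ ‖gradient φ u‖) (u : X) : ‖deformationField φ χ u‖ ≤ δ⁻¹ := by
  rw [norm_deformationField, ← one_div]
  by_cases hu : χ (φ u) = 0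
  · simp [hu, hδ.le]
  · exact div_le_div₀ zero_le_one (hχ _) hδ (h u hu)

theorem fderiv_apply_deformationField {u : X} (h : gradient φ u = 0 → χ (φ u) = 0) :
    fderiv ℝ φ u (deformationField φ χ u) = -χ (φ u) := by
  rw [← inner_gradient_left, deformationField, real_inner_smul_right,
    real_inner_self_eq_norm_sq]
  by_cases hu : gradient φ u = 0
  · simp [hu, h hu]
  · field_simp

theorem contDiff_deformationField (hφ : ContDiff ℝ 2 φ) (hχ : ContDiff ℝ 1 χ)
    (h : ∀ u, gradient φ u = 0 → φ u ∉ tsupport χ) : ContDiff ℝ 1 (deformationField φ χ) := by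
  have hgrad : ContDiff ℝ 1 (gradient φ) := contDiff_gradient hφ
  refine contDiff_iff_contDiffAt.2 fun u ↦ ?_
  by_cases hu : gradient φ u = 0
  · refine contDiffAt_const (c := 0).congr_of_eventuallyEq ?_
    filter_upwards [(hφ.continuous.tendsto u).eventually
      (notMem_tsupport_iff_eventuallyEq.1 (h u hu))] with v hv
    simp [deformationField, hv]
  · exact (((hχ.comp (hφ.of_le one_le_two)).contDiffAt.div
      ((contDiff_norm_sq ℝ).comp hgrad).contDiffAt (by simpa using hu)).neg.smul hgrad.contDiffAt)

theorem exists_deformation_of_cutoff (hφ : ContDiff ℝ 2 φ) (hχ : ContDiff ℝ 1 χ)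
    (hχ01 : ∀ s, χ s ∈ Icc 0 1) {m M δ : ℝ} (hmM : m ≤ M) (hχ1 : EqOn χ 1 (Icc m M))
    (hδ : 0 < δ) (hgrad : ∀ u, φ u ∈ tsupport χ → δ ≤ ‖gradient φ u‖) :
    ∃ η : X → X, Continuous η ∧ (∀ u, φ u ∉ tsupport χ → η u = u) ∧
      ∀ u, φ u ≤ M → φ (η u) ≤ m := by
  have hcrit : ∀ u, gradient φ u = 0 → φ u ∉ tsupport χ := fun u hu hmem ↦ by
    linarith [hgrad u hmem, norm_eq_zero.2 hu]
  set V := deformationField φ χ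
  have hV : LocallyLipschitz V := (contDiff_deformationField hφ hχ hcrit).locallyLipschitz
  have hVbdd : Bornology.IsBounded (range V) := isBounded_iff_forall_norm_le.2
    ⟨_, forall_mem_range.2 (norm_deformationField_le hδ
      (fun s ↦ abs_le.2 ⟨by linarith [(hχ01 s).1], (hχ01 s).2⟩)
      fun u hu ↦ hgrad u (subset_tsupport χ hu))⟩
  have hT : 0 ≤ M - m := sub_nonneg.2 hmM
  choose Φ hΦ0 hΦ using fun u ↦ exists_isIntegralCurveOn_Icc hV hVbdd u (M - m)
  refine ⟨(Φ · (M - m)), continuous_of_isIntegralCurveOn hV hT hΦ0 hΦ, fun u hu ↦ ?_,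
    fun u hu ↦ ?_⟩
  · have hVu : V u = 0 := by simp [V, deformationField, image_eq_zero_of_notMem_tsupport hu]
    exact (hΦ u).eqOn_Icc hV ((isIntegralCurve_const fun _ ↦ hVu).isIntegralCurveOn _) (hΦ0 u)
      (right_mem_Icc.2 hT)
  · refine le_of_hasDerivWithinAt_neg_of_eqOn_one (y := fun t ↦ φ (Φ u t)) hT (by linarith)
      (fun t ht ↦ ?_) (fun s ↦ (hχ01 s).1) hχ1 (by simpa [hΦ0])
    rw [← fderiv_apply_deformationField fun h ↦ image_eq_zero_of_notMem_tsupport (hcrit _ h)]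
    exact (hφ.differentiable two_ne_zero _).hasFDerivAt.comp_hasDerivWithinAt t (hΦ u t ht)

end Deformation

theorem willem_quantitative_deformation_lemma
    {X : Type*} [NormedAddCommGroup X] [InnerProductSpace ℝ X] [CompleteSpace X]
    (φ : X → ℝ) (hφ : ContDiff ℝ 2 φ) (c ε : ℝ) (hε : 0 < ε)
    (hgrad : ∀ u, φ u ∈ Set.Icc (c - 2*ε) (c + 2*ε) → 2*ε ≤ ‖fderiv ℝ φ u‖) :
    ∃ η : X → X, Continuous η ∧
      (∀ u, φ u ∉ Set.Icc (c - 2*ε) (c + 2*ε) → η u = u) ∧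
      (∀ u, φ u ≤ c + ε → φ (η u) ≤ c - ε) := by
  let χ : ContDiffBump c := ⟨ε, 2 * ε, hε, by linarith⟩
  have hχ : tsupport χ = Icc (c - 2 * ε) (c + 2 * ε) := by
    rw [χ.tsupport_eq, Real.closedBall_eq_Icc]
  obtain ⟨η, hη, hfix, hdown⟩ := exists_deformation_of_cutoff (m := c - ε) (M := c + ε) hφ
    χ.contDiff (fun _ ↦ ⟨χ.nonneg, χ.le_one⟩) (by linarith)
    (fun s hs ↦ χ.one_of_mem_closedBall (by rwa [Real.closedBall_eq_Icc]))
    (by positivity : 0 < 2 * ε)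
    fun u hu ↦ norm_gradient_eq_norm_fderiv (φ := φ) u ▸ hgrad u (hχ ▸ hu)
  exact ⟨η, hη, fun u hu ↦ hfix u (hχ ▸ hu), hdown⟩
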